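/- arXiv:2204.01410 — 2 statements merged into one kernel-verified Lean document; each statement's English description precedes it below -/
import Mathlib

section
/- Assume: A and Ξ are compact metric spaces, σ is a Borel probability measure on Ξ; for each k ∈ {1,…,K}, P^k : A × Ξ → ℝ^{N×N} is continuous with values in row-stochastic matrices; θ^k : A × Ξ → ℝ^N is continuous with |θ^{kn}(a,ξ)| ≤ M_r for all k, n, a, ξ; ρ ∈ Δ_K; and r(a,μ,ξ) = Σ_k ρ_k ⟨θ^k(a,ξ), μ^k⟩. Let D = Π_k D^k where each D^k is a convex compact subset of the relative interior of Δ_N, invariant in the sense that μ^k P^k(a,ξ) ∈ D^k for all μ^k ∈ D^k, a ∈ A, ξ ∈ Ξ. Suppose there exist κ ∈ [0,1) and M > 0 such that for all μ, ν ∈ D, a ∈ A, ξ ∈ Ξ: Σ_k d_H(μ^k P^k(a,ξ), ν^k P^k(a,ξ)) ≤ κ·Σ_k d_H(μ^k, ν^k), and |r(a,μ,ξ) − r(a,ν,ξ)| ≤ M·Σ_k d_H(μ^k, ν^k). Then the ergodic eigenproblem admits a solution: there exist g ∈ ℝ and h : D → ℝ, which is convex and Lipschitz continuous with respect to the metric (μ,ν)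 ↦ Σ_k d_H(μ^k, ν^k), such that for every μ ∈ D: g + h(μ) = sup_{a∈A} ∫_Ξ [ r(a,μ,ξ) + h(μP(a,ξ)) ] dσ(ξ), where μP(a,ξ) = (μ^1 P^1(a,ξ),…, μ^K P^K(a,ξ)). -/
/-!
Vanishing discount. For `α < 1` the discounted Bellman operator `h ↦ T (α • h)` is an
`α`-contraction for the sup norm on `D`, and it preserves the convex functions that are
`M / (1 - κ)`-Lipschitz for `d = ∑ₖ d_H`, because the dynamics contract `d` by `κ`; iterating
it from `0` gives a discounted value function `v_α`. Since `D` has finite `d`-diameter, the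
recentred functions `v_α - v_α μ₀` are equi-Lipschitz and uniformly bounded, and
`(1 - α) v_α μ₀` is bounded by the reward bound. Along an ultrafilter refining `α → 1` they
converge, uniformly on the compact set `D` by Ascoli's theorem, and the limits `g`, `h` solve
`g + h = T h`.
-/

open MeasureTheory

/-- Hilbert's projective metric on positive vectors. -/
noncomputable def dH {n : ℕ} (u v : Fin n → ℝ) : ℝ :=
  ⨆ p : Fin n × Fin n, Real.log (u p.1 / v p.1 * (v p.2 / u p.2))

open Filter Topology Set

section Sup

variable {ι : Type*} [Nonempty ι]

theorem abs_ciSup_sub_ciSup_le {f g : ι → ℝ} {c : ℝ} (hf : BddAbove (range f))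
    (hg : BddAbove (range g)) (h : ∀ i, |f i - g i| ≤ c) : |(⨆ i, f i) - ⨆ i, g i| ≤ c := by
  refine abs_sub_le_iff.2 ⟨sub_le_iff_le_add.2 (ciSup_le fun i => ?_),
    sub_le_iff_le_add.2 (ciSup_le fun i => ?_)⟩
  · linarith [le_ciSup hg i, (abs_le.1 (h i)).2]
  · linarith [le_ciSup hf i, (abs_le.1 (h i)).1]

theorem convexOn_ciSup {E : Type*} [AddCommMonoid E] [Module ℝ E] {s : Set E} {f : ι → E → ℝ}
    (hf : ∀ i, ConvexOn ℝ s (f i)) (hbdd : ∀ x ∈ s, BddAbove (range fun i => f i x)) :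
    ConvexOn ℝ s fun x => ⨆ i, f i x := by
  refine ⟨(hf (Classical.arbitrary ι)).1, fun x hx y hy a b ha hb hab => ciSup_le fun i => ?_⟩
  calc f i (a • x + b • y) ≤ a • f i x + b • f i y := (hf i).2 hx hy ha hb hab
    _ ≤ a • (⨆ i, f i x) + b • ⨆ i, f i y := by
      gcongr
      · exact le_ciSup (hbdd x hx) i
      · exact le_ciSup (hbdd y hy) i

end Sup

theorem convexOn_integral {E Ξ : Type*} [AddCommMonoid E] [Module ℝ E] [MeasurableSpace Ξ]
    {σ : Measure Ξ} {s : Set E} {f : E → Ξ → ℝ} (hs : Convex ℝ s) (hf : ∀ ξ, ConvexOn ℝ s (f · ξ))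
    (hint : ∀ x ∈ s, Integrable (f x) σ) : ConvexOn ℝ s fun x => ∫ ξ, f x ξ ∂σ := by
  refine ⟨hs, fun x hx y hy a b ha hb hab => ?_⟩
  calc ∫ ξ, f (a • x + b • y) ξ ∂σ ≤ ∫ ξ, a • f x ξ + b • f y ξ ∂σ :=
        integral_mono (hint _ (hs hx hy ha hb hab)) (((hint x hx).smul a).add ((hint y hy).smul b))
          fun ξ => (hf ξ).2 hx hy ha hb hab
    _ = a • ∫ ξ, f x ξ ∂σ + b • ∫ ξ, f y ξ ∂σ := by
      simp only [smul_eq_mul]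
      rw [integral_add ((hint x hx).const_mul a) ((hint y hy).const_mul b), integral_const_mul,
        integral_const_mul]

theorem convexOn_of_tendsto {E ι : Type*} [AddCommMonoid E] [Module ℝ E] {s : Set E}
    {p : Filter ι} [p.NeBot] {F : ι → E → ℝ} {f : E → ℝ} (hs : Convex ℝ s)
    (hF : ∀ i, ConvexOn ℝ s (F i)) (hlim : ∀ x ∈ s, Tendsto (F · x) p (𝓝 (f x))) :
    ConvexOn ℝ s f :=
  ⟨hs, fun x hx y hy a b ha hb hab => le_of_tendsto_of_tendsto' (hlim _ (hs hx hy ha hb hab))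
    (((hlim x hx).const_smul a).add ((hlim y hy).const_smul b)) fun i => (hF i).2 hx hy ha hb hab⟩

theorem Ultrafilter.tendsto_limUnder_of_abs_le {ι : Type*} (U : Ultrafilter ι) {u : ι → ℝ} {B : ℝ}
    (hu : ∀ i, |u i| ≤ B) : Tendsto u U (𝓝 (limUnder (U : Filter ι) u)) := by
  obtain ⟨c, -, hc⟩ := (isCompact_Icc (a := -B) (b := B)).ultrafilter_le_nhds (U.map u) <|
    le_principal_iff.2 (mem_map.2 (univ_mem' fun i => abs_le.1 (hu i)))
  exact tendsto_nhds_limUnder ⟨c, hc⟩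

theorem exists_fixedPoint_of_contraction {X : Type*} {D : Set X} {S : Set (X → ℝ)}
    {T : (X → ℝ) → X → ℝ} {α c : ℝ} {f₀ : X → ℝ} (hα0 : 0 ≤ α) (hα1 : α < 1)
    (hS : MapsTo T S S) (hf₀ : f₀ ∈ S) (hc : ∀ x ∈ D, |T f₀ x - f₀ x| ≤ c)
    (hT : ∀ f ∈ S, ∀ g ∈ S, ∀ c, (∀ x ∈ D, |f x - g x| ≤ c) → ∀ x ∈ D, |T f x - T g x| ≤ α * c)
    (hclosed : ∀ u : ℕ → X → ℝ, (∀ n, u n ∈ S) → ∀ f : X → ℝ,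
      (∀ x ∈ D, Tendsto (u · x) atTop (𝓝 (f x))) → f ∈ S) :
    ∃ f ∈ S, (∀ x ∈ D, |f x - f₀ x| ≤ c / (1 - α)) ∧ ∀ x ∈ D, T f x = f x := by
  set u : ℕ → X → ℝ := fun n => T^[n] f₀
  have hu : ∀ n, u n ∈ S := fun n => hS.iterate n hf₀
  have hsucc : ∀ n, u (n + 1) = T (u n) := fun n => Function.iterate_succ_apply' T n f₀
  have hstep : ∀ n, ∀ x ∈ D, dist (u n x) (u (n + 1) x) ≤ c * α ^ n := by
    intro n
    induction n with
    | zero => simpa [Real.dist_eq, abs_sub_comm, u] using hc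
    | succ n ih =>
      intro x hx
      calc dist (u (n + 1) x) (u (n + 1 + 1) x) ≤ α * (c * α ^ n) := by
            rw [Real.dist_eq, hsucc, hsucc (n + 1)]
            exact hT _ (hu n) _ (hu (n + 1)) _ (by simpa [← hsucc, Real.dist_eq] using ih) x hx
        _ = c * α ^ (n + 1) := by ring
  set f : X → ℝ := fun x => limUnder atTop (u · x)
  have hlim : ∀ x ∈ D, Tendsto (u · x) atTop (𝓝 (f x)) := fun x hx =>
    tendsto_nhds_limUnder (cauchySeq_tendsto_of_complete
      (cauchySeq_of_le_geometric α c hα1 fun n => hstep n x hx))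
  have hdist : ∀ n, ∀ x ∈ D, |u n x - f x| ≤ c * α ^ n / (1 - α) := fun n x hx =>
    dist_le_of_le_geometric_of_tendsto α c hα1 (fun n => hstep n x hx) (hlim x hx) n
  have hf : f ∈ S := hclosed u hu f hlim
  refine ⟨f, hf, fun x hx =>
    (abs_sub_comm _ _).trans_le (by simpa [u] using hdist 0 x hx), fun x hx => ?_⟩
  have hT_lim : Tendsto (fun n => u (n + 1) x) atTop (𝓝 (T f x)) := by
    refine tendsto_iff_dist_tendsto_zero.2 (squeeze_zero (fun _ => dist_nonneg) (fun n => ?_)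
      (by simpa using (tendsto_pow_atTop_nhds_zero_of_lt_one hα0 hα1).const_mul (α * c / (1 - α))))
    calc dist (u (n + 1) x) (T f x) ≤ α * (c * α ^ n / (1 - α)) := by
          rw [Real.dist_eq, hsucc]; exact hT _ (hu n) _ hf _ (hdist n) x hx
      _ = α * c / (1 - α) * α ^ n := by ring
  exact tendsto_nhds_unique hT_lim ((hlim x hx).comp (tendsto_add_atTop_nat 1))

section Gauge

variable {X : Type*} {d : X → X → ℝ} {s : Set X} {L : ℝ}

/-- The gauge `d` need not be a metric. -/
def LipschitzOnWrt (d : X → X → ℝ) (L : ℝ) (s : Set X) (f : X → ℝ) : Prop :=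
  ∀ x ∈ s, ∀ y ∈ s, |f x - f y| ≤ L * d x y

theorem LipschitzOnWrt.weaken {f : X → ℝ} {L' : ℝ} (hd : ∀ x ∈ s, ∀ y ∈ s, 0 ≤ d x y)
    (hf : LipschitzOnWrt d L s f) (hL : L ≤ L') : LipschitzOnWrt d L' s f := fun x hx y hy =>
  (hf x hx y hy).trans (mul_le_mul_of_nonneg_right hL (hd x hx y hy))

theorem LipschitzOnWrt.const_smul {f : X → ℝ} (hf : LipschitzOnWrt d L s f) (c : ℝ) :
    LipschitzOnWrt d (|c| * L) s (c • f) := fun x hx y hy => by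
  simpa [← mul_sub, abs_mul, mul_assoc] using
    mul_le_mul_of_nonneg_left (hf x hx y hy) (abs_nonneg c)

theorem LipschitzOnWrt.of_tendsto {ι : Type*} {p : Filter ι} [p.NeBot] {F : ι → X → ℝ}
    {f : X → ℝ} (hF : ∀ i, LipschitzOnWrt d L s (F i))
    (hlim : ∀ x ∈ s, Tendsto (F · x) p (𝓝 (f x))) : LipschitzOnWrt d L s f := fun x hx y hy =>
  le_of_tendsto' ((hlim x hx).sub (hlim y hy)).abs fun i => hF i x hx y hy

theorem equicontinuousOn_of_lipschitzOnWrt [TopologicalSpace X] {ι : Type*} {F : ι → X → ℝ}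
    (hd : ContinuousOn (fun q : X × X => d q.1 q.2) (s ×ˢ s)) (hd_self : ∀ x ∈ s, d x x = 0)
    (hF : ∀ i, LipschitzOnWrt d L s (F i)) : EquicontinuousOn F s := by
  intro x hx
  rw [Metric.uniformity_basis_dist.equicontinuousWithinAt_iff_right]
  intro ε hε
  have hdx : Tendsto (fun y => L * d y x) (𝓝[s] x) (𝓝 (L * d x x)) :=
    ((hd (x, x) ⟨hx, hx⟩).comp (f := fun y => (y, x))
      (continuousWithinAt_id.prodMk continuousWithinAt_const)
      fun y hy => ⟨hy, hx⟩).const_mul L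
  rw [hd_self x hx, mul_zero] at hdx
  filter_upwards [hdx (gt_mem_nhds hε), self_mem_nhdsWithin] with y hy hys i
  rw [Real.dist_eq, abs_sub_comm]
  exact (hF i y hys x hx).trans_lt hy

theorem LipschitzOnWrt.continuousOn [TopologicalSpace X] {f : X → ℝ} (hf : LipschitzOnWrt d L s f)
    (hd : ContinuousOn (fun q : X × X => d q.1 q.2) (s ×ˢ s)) (hd_self : ∀ x ∈ s, d x x = 0) :
    ContinuousOn f s :=
  (equicontinuousOn_of_lipschitzOnWrt hd hd_self fun _ : Unit => hf).continuousOn ()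

theorem tendstoUniformlyOn_of_lipschitzOnWrt [TopologicalSpace X] {ι : Type*} {p : Filter ι}
    {F : ι → X → ℝ} {f : X → ℝ} (hs : IsCompact s)
    (hd : ContinuousOn (fun q : X × X => d q.1 q.2) (s ×ˢ s)) (hd_self : ∀ x ∈ s, d x x = 0)
    (hF : ∀ i, LipschitzOnWrt d L s (F i))
    (hlim : ∀ x ∈ s, Tendsto (F · x) p (𝓝 (f x))) : TendstoUniformlyOn F f p s := by
  have hequi := equicontinuousOn_of_lipschitzOnWrt hd hd_self hF
  have := (EquicontinuousOn.tendsto_uniformOnFun_iff_pi' (𝔖 := {s}) (by simpa using hs)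
    (by simpa using hequi) p f).2 (by simpa [tendsto_pi_nhds] using fun x hx => hlim x hx)
  exact UniformOnFun.tendsto_iff_tendstoUniformlyOn.1 this s rfl

end Gauge

section Bellman

variable {A Ξ X : Type*} [TopologicalSpace Ξ] [MeasurableSpace Ξ] {σ : Measure Ξ}
  [TopologicalSpace X] {D : Set X} {Φ : A → Ξ → X → X} {r : A → X → Ξ → ℝ} {R : ℝ}

/-- The discounted operator with discount factor `α` is `bellman σ r Φ (α • h)`. -/
noncomputable def bellman (σ : Measure Ξ) (r : A → X → Ξ → ℝ) (Φ : A → Ξ → X → X) (h : X → ℝ)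
    (x : X) : ℝ :=
  ⨆ a, ∫ ξ, r a x ξ + h (Φ a ξ x) ∂σ

structure BellmanRegular (D : Set X) (Φ : A → Ξ → X → X) (r : A → X → Ξ → ℝ) (R : ℝ) : Prop where
  isCompact : IsCompact D
  mapsTo : ∀ a ξ, MapsTo (Φ a ξ) D D
  continuous_dynamics : ∀ a x, Continuous fun ξ => Φ a ξ x
  continuous_reward : ∀ a x, Continuous (r a x)
  abs_reward_le : ∀ a ξ, ∀ x ∈ D, |r a x ξ| ≤ R

namespace BellmanRegular

variable [IsProbabilityMeasure σ] {h : X → ℝ} {x : X}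

theorem integrable_integrand [CompactSpace Ξ] [OpensMeasurableSpace Ξ]
    (hb : BellmanRegular D Φ r R) (hh : ContinuousOn h D) (a : A) (hx : x ∈ D) :
    Integrable (fun ξ => r a x ξ + h (Φ a ξ x)) σ :=
  ((hb.continuous_reward a x).add (hh.comp_continuous (hb.continuous_dynamics a x)
    fun ξ => hb.mapsTo a ξ hx)).integrable_of_hasCompactSupport
    (HasCompactSupport.of_compactSpace _)

theorem abs_integral_le (hb : BellmanRegular D Φ r R) {B : ℝ} (hB : ∀ y ∈ D, |h y| ≤ B) (a : A)
    (hx : x ∈ D) : |∫ ξ, r a x ξ + h (Φ a ξ x) ∂σ| ≤ R + B := by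
  simpa using norm_integral_le_of_norm_le_const (μ := σ) (f := fun ξ => r a x ξ + h (Φ a ξ x))
    (Eventually.of_forall fun ξ => (abs_add_le _ _).trans
      (add_le_add (hb.abs_reward_le a ξ x hx) (hB _ (hb.mapsTo a ξ hx))))

theorem bddAbove_range_integral (hb : BellmanRegular D Φ r R) (hh : ContinuousOn h D)
    (hx : x ∈ D) : BddAbove (range fun a => ∫ ξ, r a x ξ + h (Φ a ξ x) ∂σ) := by
  obtain ⟨B, hB⟩ := hb.isCompact.exists_bound_of_continuousOn hh
  exact ⟨R + B, forall_mem_range.2 fun a =>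
    (le_abs_self _).trans (hb.abs_integral_le (fun y hy => by simpa using hB y hy) a hx)⟩

variable [Nonempty A]

theorem abs_bellman_le (hb : BellmanRegular D Φ r R) (hh : ContinuousOn h D) {B : ℝ}
    (hB : ∀ y ∈ D, |h y| ≤ B) (hx : x ∈ D) : |bellman σ r Φ h x| ≤ R + B := by
  obtain ⟨a⟩ := ‹Nonempty A›
  refine abs_le.2 ⟨?_, ciSup_le fun a => (abs_le.1 (hb.abs_integral_le hB a hx)).2⟩
  exact (abs_le.1 (hb.abs_integral_le hB a hx)).1.trans
    (le_ciSup (hb.bddAbove_range_integral hh hx) a)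

variable [CompactSpace Ξ] [OpensMeasurableSpace Ξ]

theorem abs_bellman_sub_bellman_le (hb : BellmanRegular D Φ r R) {f g : X → ℝ} {y : X} {c : ℝ}
    (hf : ContinuousOn f D) (hg : ContinuousOn g D) (hx : x ∈ D) (hy : y ∈ D)
    (hc : ∀ a ξ, |r a x ξ + f (Φ a ξ x) - (r a y ξ + g (Φ a ξ y))| ≤ c) :
    |bellman σ r Φ f x - bellman σ r Φ g y| ≤ c :=
  abs_ciSup_sub_ciSup_le (hb.bddAbove_range_integral hf hx) (hb.bddAbove_range_integral hg hy)
    fun a => by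
      rw [← integral_sub (hb.integrable_integrand hf a hx) (hb.integrable_integrand hg a hy)]
      simpa using norm_integral_le_of_norm_le_const (μ := σ)
        (f := fun ξ => r a x ξ + f (Φ a ξ x) - (r a y ξ + g (Φ a ξ y)))
        (Eventually.of_forall (hc a))

theorem bellman_add_const (hb : BellmanRegular D Φ r R) (hh : ContinuousOn h D) (c : ℝ)
    (hx : x ∈ D) : bellman σ r Φ (fun y => h y + c) x = bellman σ r Φ h x + c := by
  have hint (a : A) :
      ∫ ξ, r a x ξ + (h (Φ a ξ x) + c) ∂σ = (∫ ξ, r a x ξ + h (Φ a ξ x) ∂σ) + c := by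
    simp_rw [← add_assoc]
    rw [integral_add (hb.integrable_integrand hh a hx) (integrable_const c)]
    simp
  simp only [bellman, hint]
  exact ((OrderIso.addRight c).map_ciSup (hb.bddAbove_range_integral hh hx)).symm

theorem lipschitzOnWrt_bellman (hb : BellmanRegular D Φ r R) {d : X → X → ℝ} {κ M L : ℝ}
    (hr : ∀ a ξ, LipschitzOnWrt d M D (r a · ξ))
    (hΦ : ∀ a ξ, ∀ x ∈ D, ∀ y ∈ D, d (Φ a ξ x) (Φ a ξ y) ≤ κ * d x y)
    (hh : LipschitzOnWrt d L D h) (hhc : ContinuousOn h D) (hL : 0 ≤ L) :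
    LipschitzOnWrt d (M + L * κ) D (bellman σ r Φ h) := fun x hx y hy =>
  hb.abs_bellman_sub_bellman_le hhc hhc hx hy fun a ξ => calc
    _ = |(r a x ξ - r a y ξ) + (h (Φ a ξ x) - h (Φ a ξ y))| := by ring_nf
    _ ≤ M * d x y + L * (κ * d x y) := (abs_add_le _ _).trans (add_le_add (hr a ξ x hx y hy)
        ((hh _ (hb.mapsTo a ξ hx) _ (hb.mapsTo a ξ hy)).trans
          (mul_le_mul_of_nonneg_left (hΦ a ξ x hx y hy) hL)))
    _ = (M + L * κ) * d x y := by ring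

theorem convexOn_bellman [AddCommGroup X] [Module ℝ X] (hb : BellmanRegular D Φ r R)
    (hD : Convex ℝ D) (hΦ : ∀ a ξ, IsLinearMap ℝ (Φ a ξ)) (hr : ∀ a ξ, ConvexOn ℝ D (r a · ξ))
    (hh : ConvexOn ℝ D h) (hhc : ContinuousOn h D) : ConvexOn ℝ D (bellman σ r Φ h) :=
  convexOn_ciSup (fun a => convexOn_integral hD
    (fun ξ => (hr a ξ).add ((hh.comp_linearMap ((hΦ a ξ).mk' _)).subset (hb.mapsTo a ξ) hD))
    fun _ hx => hb.integrable_integrand hhc a hx) fun _ hx => hb.bddAbove_range_integral hhc hx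

theorem tendsto_bellman (hb : BellmanRegular D Φ r R) {ι : Type*} {p : Filter ι}
    {F : ι → X → ℝ} (hF : TendstoUniformlyOn F h p D) (hFc : ∀ i, ContinuousOn (F i) D)
    (hh : ContinuousOn h D) (hx : x ∈ D) :
    Tendsto (fun i => bellman σ r Φ (F i) x) p (𝓝 (bellman σ r Φ h x)) := by
  refine Metric.tendsto_nhds.2 fun ε hε => ?_
  filter_upwards [Metric.tendstoUniformlyOn_iff.1 hF (ε / 2) (half_pos hε)] with i hi
  refine ((hb.abs_bellman_sub_bellman_le (hFc i) hh hx hx fun a ξ => ?_).trans_lt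
    (half_lt_self hε))
  rw [add_sub_add_left_eq_sub, ← Real.dist_eq, dist_comm]
  exact (hi _ (hb.mapsTo a ξ hx)).le

end BellmanRegular

end Bellman

section Model

variable {A Ξ X : Type*} [TopologicalSpace Ξ] [CompactSpace Ξ] [MeasurableSpace Ξ]
  [OpensMeasurableSpace Ξ] {σ : Measure Ξ} [IsProbabilityMeasure σ] [AddCommGroup X] [Module ℝ X]
  [TopologicalSpace X] {D : Set X} {d : X → X → ℝ} {Φ : A → Ξ → X → X} {r : A → X → Ξ → ℝ}
  {κ M R : ℝ}

structure ContractiveModel (D : Set X) (d : X → X → ℝ) (Φ : A → Ξ → X → X)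
    (r : A → X → Ξ → ℝ) (κ M R : ℝ) : Prop extends BellmanRegular D Φ r R where
  convex : Convex ℝ D
  dist_nonneg : ∀ x ∈ D, ∀ y ∈ D, 0 ≤ d x y
  dist_self : ∀ x ∈ D, d x x = 0
  continuousOn_dist : ContinuousOn (fun p : X × X => d p.1 p.2) (D ×ˢ D)
  isLinearMap : ∀ a ξ, IsLinearMap ℝ (Φ a ξ)
  contraction : ∀ a ξ, ∀ x ∈ D, ∀ y ∈ D, d (Φ a ξ x) (Φ a ξ y) ≤ κ * d x y
  convexOn_reward : ∀ a ξ, ConvexOn ℝ D (r a · ξ)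
  lipschitzOnWrt_reward : ∀ a ξ, LipschitzOnWrt d M D (r a · ξ)

namespace ContractiveModel

variable [Nonempty A]

theorem exists_discounted_solution (hm : ContractiveModel D d Φ r κ M R) (hκ1 : κ < 1)
    (hM : 0 ≤ M) {α : ℝ} (hα0 : 0 ≤ α) (hα1 : α < 1) :
    ∃ v : X → ℝ, LipschitzOnWrt d (M / (1 - κ)) D v ∧ ConvexOn ℝ D v ∧
      (∀ x ∈ D, |v x| ≤ R / (1 - α)) ∧ ∀ x ∈ D, bellman σ r Φ (α • v) x = v x := by
  set L := M / (1 - κ)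
  have hL : 0 ≤ L := div_nonneg hM (by linarith)
  have hML : M + L * κ = L := by linarith [div_mul_cancel₀ M (sub_ne_zero.2 hκ1.ne')]
  have hαL {f : X → ℝ} (hf : LipschitzOnWrt d L D f) : LipschitzOnWrt d L D (α • f) :=
    (hf.const_smul α).weaken hm.dist_nonneg
      (mul_le_of_le_one_left hL (abs_le.2 ⟨by linarith, hα1.le⟩))
  have hcont {f : X → ℝ} (hf : LipschitzOnWrt d L D f) : ContinuousOn (α • f) D :=
    (hαL hf).continuousOn hm.continuousOn_dist hm.dist_self
  obtain ⟨v, ⟨hvL, hvC⟩, hv0, hfix⟩ := exists_fixedPoint_of_contraction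
    (S := {f | LipschitzOnWrt d L D f ∧ ConvexOn ℝ D f}) (T := fun f => bellman σ r Φ (α • f))
    (f₀ := 0) (c := R) hα0 hα1
    (fun f ⟨hfL, hfC⟩ =>
      ⟨hML ▸ hm.lipschitzOnWrt_bellman hm.lipschitzOnWrt_reward hm.contraction (hαL hfL)
          (hcont hfL) hL,
        hm.convexOn_bellman hm.convex hm.isLinearMap hm.convexOn_reward (hfC.smul hα0)
          (hcont hfL)⟩)
    ⟨fun x hx y hy => by simpa using mul_nonneg hL (hm.dist_nonneg x hx y hy),
      convexOn_const 0 hm.convex⟩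
    (fun x hx => by
      simpa using hm.abs_bellman_le (h := 0) (B := 0) continuousOn_const (by simp) hx)
    (fun f ⟨hfL, _⟩ g ⟨hgL, _⟩ c hfg x hx =>
      hm.abs_bellman_sub_bellman_le (hcont hfL) (hcont hgL) hx hx fun a ξ => by
        simpa [← mul_sub, abs_mul, abs_of_nonneg hα0] using
          mul_le_mul_of_nonneg_left (hfg _ (hm.mapsTo a ξ hx)) hα0)
    (fun u hu f hlim => ⟨LipschitzOnWrt.of_tendsto (fun n => (hu n).1) hlim,
      convexOn_of_tendsto hm.convex (fun n => (hu n).2) hlim⟩)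
  exact ⟨v, hvL, hvC, fun x hx => by simpa using hv0 x hx, hfix⟩

theorem exists_recentred_discounted_solution (hm : ContractiveModel D d Φ r κ M R) (hκ1 : κ < 1)
    (hM : 0 ≤ M) {x₀ : X} (hx₀ : x₀ ∈ D) {α : ℝ} (hα0 : 0 ≤ α) (hα1 : α < 1) :
    ∃ (g : ℝ) (w : X → ℝ), |g| ≤ R ∧ w x₀ = 0 ∧ LipschitzOnWrt d (M / (1 - κ)) D w ∧
      ConvexOn ℝ D w ∧ ∀ x ∈ D, g + w x = bellman σ r Φ (α • w) x := by
  obtain ⟨v, hvL, hvC, hvR, hfix⟩ := hm.exists_discounted_solution (σ := σ) hκ1 hM hα0 hα1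
  have hwL : LipschitzOnWrt d (M / (1 - κ)) D fun x => v x - v x₀ := fun x hx y hy => by
    simpa using hvL x hx y hy
  refine ⟨(1 - α) * v x₀, fun x => v x - v x₀, ?_, sub_self _, hwL,
    hvC.sub (concaveOn_const _ hm.convex), fun x hx => ?_⟩
  · rw [abs_mul, abs_of_pos (sub_pos.2 hα1)]
    exact (mul_le_mul_of_nonneg_left (hvR x₀ hx₀) (sub_pos.2 hα1).le).trans_eq
      (mul_div_cancel₀ R (sub_pos.2 hα1).ne')
  have hα : α • v = fun y => (α • fun x => v x - v x₀) y + α * v x₀ := by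
    ext y; simp only [Pi.smul_apply, smul_eq_mul]; ring
  have := hm.bellman_add_const (σ := σ) (h := α • fun x => v x - v x₀)
    (((hwL.const_smul α).continuousOn hm.continuousOn_dist hm.dist_self)) (α * v x₀) hx
  rw [← hα, hfix x hx] at this
  linarith

theorem exists_ergodic_solution_of_tendsto (hm : ContractiveModel D d Φ r κ M R) {L : ℝ}
    (hL : 0 ≤ L) {x₀ : X} (hx₀ : x₀ ∈ D) {α : ℕ → ℝ} (hα : Tendsto α atTop (𝓝 1))
    (hα1 : ∀ m, |α m| ≤ 1) {g : ℕ → ℝ} {w : ℕ → X → ℝ} (hg : ∀ m, |g m| ≤ R)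
    (hw₀ : ∀ m, w m x₀ = 0) (hwL : ∀ m, LipschitzOnWrt d L D (w m))
    (hwC : ∀ m, ConvexOn ℝ D (w m))
    (heq : ∀ m, ∀ x ∈ D, g m + w m x = bellman σ r Φ (α m • w m) x) :
    ∃ (g : ℝ) (h : X → ℝ), ConvexOn ℝ D h ∧ LipschitzOnWrt d L D h ∧
      ∀ x ∈ D, g + h x = bellman σ r Φ h x := by
  obtain ⟨C, hC⟩ := (hm.isCompact.prod hm.isCompact).exists_bound_of_continuousOn
    hm.continuousOn_dist
  have hwB (m : ℕ) (x : X) (hx : x ∈ D) : |w m x| ≤ L * C := by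
    simpa [hw₀] using (hwL m x hx x₀ hx₀).trans
      (mul_le_mul_of_nonneg_left ((le_abs_self _).trans (hC (x, x₀) ⟨hx, hx₀⟩)) hL)
  -- Pointwise limits along an ultrafilter exist by compactness of `[-L C, L C]`; equi-Lipschitz
  -- continuity makes them uniform on `D`.
  set U : Ultrafilter ℕ := Ultrafilter.of atTop
  set h : X → ℝ := fun x => limUnder (U : Filter ℕ) (w · x)
  have hwh : ∀ x ∈ D, Tendsto (w · x) U (𝓝 (h x)) := fun x hx =>
    U.tendsto_limUnder_of_abs_le (hwB · x hx)
  have hhL : LipschitzOnWrt d L D h := LipschitzOnWrt.of_tendsto hwL hwh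
  have hαwL (m : ℕ) : LipschitzOnWrt d L D (α m • w m) :=
    ((hwL m).const_smul (α m)).weaken hm.dist_nonneg (mul_le_of_le_one_left hL (hα1 m))
  have hαw : TendstoUniformlyOn (fun m => α m • w m) h U D :=
    tendstoUniformlyOn_of_lipschitzOnWrt hm.isCompact hm.continuousOn_dist hm.dist_self hαwL
      fun x hx => by simpa using ((hα.mono_left (Ultrafilter.of_le atTop)).mul (hwh x hx))
  refine ⟨limUnder (U : Filter ℕ) g, h, convexOn_of_tendsto hm.convex hwC hwh, hhL,
    fun x hx => tendsto_nhds_unique ((U.tendsto_limUnder_of_abs_le hg).add (hwh x hx)) ?_⟩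
  simp_rw [heq _ x hx]
  exact hm.tendsto_bellman hαw
    (fun m => (hαwL m).continuousOn hm.continuousOn_dist hm.dist_self)
    (hhL.continuousOn hm.continuousOn_dist hm.dist_self) hx

theorem exists_ergodic_solution (hm : ContractiveModel D d Φ r κ M R) (hκ1 : κ < 1)
    (hM : 0 ≤ M) :
    ∃ (g : ℝ) (h : X → ℝ), ConvexOn ℝ D h ∧ LipschitzOnWrt d (M / (1 - κ)) D h ∧
      ∀ x ∈ D, g + h x = bellman σ r Φ h x := by
  rcases D.eq_empty_or_nonempty with rfl | ⟨x₀, hx₀⟩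
  · exact ⟨0, 0, ⟨convex_empty, by simp⟩, by simp [LipschitzOnWrt], by simp⟩
  have hα (m : ℕ) : 0 ≤ (m / (m + 1) : ℝ) ∧ (m / (m + 1) : ℝ) < 1 :=
    ⟨by positivity, (div_lt_one (by positivity)).2 (by linarith)⟩
  choose g w hg hw₀ hwL hwC heq using fun m : ℕ =>
    hm.exists_recentred_discounted_solution (σ := σ) hκ1 hM hx₀ (hα m).1 (hα m).2
  exact hm.exists_ergodic_solution_of_tendsto (div_nonneg hM (by linarith)) hx₀
    (tendsto_natCast_div_add_atTop 1) (fun m => abs_le.2 ⟨by linarith [(hα m).1], (hα m).2.le⟩)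
    hg hw₀ hwL hwC heq

end ContractiveModel

end Model

section Hilbert

variable {n : ℕ}

theorem dH_self {u : Fin n → ℝ} (hu : ∀ i, 0 < u i) : dH u u = 0 := by
  simp [dH, fun i => (hu i).ne']

theorem dH_nonneg (u v : Fin n → ℝ) : 0 ≤ dH u v := by
  rcases isEmpty_or_nonempty (Fin n) with hn | ⟨⟨i⟩⟩
  · simp [dH]
  · -- the diagonal term is `log 1`, or `log 0 = 0` when a coordinate vanishes
    refine le_ciSup_of_le (Set.finite_range _).bddAbove (i, i) (le_of_eq ?_)
    rcases eq_or_ne (u i) 0 with h | h <;> rcases eq_or_ne (v i) 0 with h' | h' <;> simp [*]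

theorem continuousOn_dH :
    ContinuousOn (fun p : (Fin n → ℝ) × (Fin n → ℝ) => dH p.1 p.2)
      {p | (∀ i, 0 < p.1 i) ∧ ∀ i, 0 < p.2 i} := by
  rcases isEmpty_or_nonempty (Fin n) with hn | hn
  · simp only [dH, Real.iSup_of_isEmpty]
    exact continuousOn_const
  simp only [dH, ← Finset.sup'_univ_eq_ciSup]
  refine ContinuousOn.finset_sup'_apply _ fun q _ => ContinuousOn.log ?_ fun p hp => ?_
  · exact ContinuousOn.mul (ContinuousOn.div (by fun_prop) (by fun_prop) fun p hp => (hp.2 _).ne')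
      (ContinuousOn.div (by fun_prop) (by fun_prop) fun p hp => (hp.1 _).ne')
  · have := hp.1 q.1; have := hp.1 q.2; have := hp.2 q.1; have := hp.2 q.2
    positivity

theorem continuousOn_sum_dH {ι : Type*} [Fintype ι]
    {s : Set ((ι → Fin n → ℝ) × (ι → Fin n → ℝ))} (hs : ∀ p ∈ s, ∀ k i, 0 < p.1 k i ∧ 0 < p.2 k i) :
    ContinuousOn (fun p => ∑ k, dH (p.1 k) (p.2 k)) s := by
  refine continuousOn_finsetSum _ fun k _ => ?_
  have hc : ContinuousOn (fun p : (ι → Fin n → ℝ) × (ι → Fin n → ℝ) => (p.1 k, p.2 k)) s :=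
    ((continuous_apply k).comp continuous_fst).prodMk ((continuous_apply k).comp continuous_snd)
      |>.continuousOn
  exact continuousOn_dH.comp hc fun p hp => ⟨fun i => (hs p hp k i).1, fun i => (hs p hp k i).2⟩

end Hilbert

theorem abs_sum_mul_le_of_mem_stdSimplex {ι : Type*} [Fintype ι] {w f : ι → ℝ} {B : ℝ}
    (hw : w ∈ stdSimplex ℝ ι) (hf : ∀ i, |f i| ≤ B) : |∑ i, w i * f i| ≤ B :=
  calc |∑ i, w i * f i| ≤ ∑ i, |w i * f i| := Finset.abs_sum_le_sum_abs _ _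
    _ ≤ ∑ i, w i * B := Finset.sum_le_sum fun i _ => by
      rw [abs_mul, abs_of_nonneg (hw.1 i)]; exact mul_le_mul_of_nonneg_left (hf i) (hw.1 i)
    _ = B := by rw [← Finset.sum_mul, hw.2, one_mul]

theorem abs_sum_mul_sum_mul_le {ι m : Type*} [Fintype ι] [Fintype m] {ρ : ι → ℝ}
    {θ μ : ι → m → ℝ} {B : ℝ} (hρ : ρ ∈ stdSimplex ℝ ι) (hμ : ∀ k, μ k ∈ stdSimplex ℝ m)
    (hθ : ∀ k n, |θ k n| ≤ B) : |∑ k, ρ k * ∑ n, θ k n * μ k n| ≤ B :=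
  abs_sum_mul_le_of_mem_stdSimplex hρ fun k => by
    simpa only [mul_comm] using abs_sum_mul_le_of_mem_stdSimplex (hμ k) (hθ k)

theorem isLinearMap_pi_vecMul {ι m n : Type*} [Fintype m] (P : ι → Matrix m n ℝ) :
    IsLinearMap ℝ fun μ : ι → m → ℝ => fun k => Matrix.vecMul (μ k) (P k) :=
  ⟨fun _ _ => funext fun _ => Matrix.add_vecMul _ _ _,
    fun c μ => funext fun k => Matrix.smul_vecMul c (μ k) (P k)⟩

theorem isLinearMap_sum_mul_sum_mul {ι m : Type*} [Fintype ι] [Fintype m] (ρ : ι → ℝ)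
    (θ : ι → m → ℝ) : IsLinearMap ℝ fun μ : ι → m → ℝ => ∑ k, ρ k * ∑ n, θ k n * μ k n :=
  ⟨fun μ ν => by simp [mul_add, Finset.sum_add_distrib],
    fun c μ => by
      simp only [Pi.smul_apply, smul_eq_mul, Finset.mul_sum]
      exact Finset.sum_congr rfl fun _ _ => Finset.sum_congr rfl fun _ _ => by ring⟩

theorem ergodic_eigenproblem_exists_general
    {A Ξ : Type*} [MetricSpace A] [Nonempty A]
    [MetricSpace Ξ] [CompactSpace Ξ] [MeasurableSpace Ξ] [BorelSpace Ξ]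
    (σ : Measure Ξ) [IsProbabilityMeasure σ]
    (K N : ℕ)
    (P : Fin K → A → Ξ → Matrix (Fin N) (Fin N) ℝ)
    (hPcont : ∀ k, Continuous fun p : A × Ξ => P k p.1 p.2)
    (θ : Fin K → A → Ξ → Fin N → ℝ)
    (hθcont : ∀ k, Continuous fun p : A × Ξ => θ k p.1 p.2)
    (Mr : ℝ) (hθbdd : ∀ k a ξ n, |θ k a ξ n| ≤ Mr)
    (ρ : Fin K → ℝ) (hρ : ρ ∈ stdSimplex ℝ (Fin K))
    (r : A → (Fin K → Fin N → ℝ) → Ξ → ℝ)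
    (hr : ∀ a μ ξ, r a μ ξ = ∑ k, ρ k * ∑ n, θ k a ξ n * μ k n)
    (Dk : Fin K → Set (Fin N → ℝ))
    (hDkconvex : ∀ k, Convex ℝ (Dk k))
    (hDkcompact : ∀ k, IsCompact (Dk k))
    (hDksub : ∀ k, ∀ x ∈ Dk k, x ∈ stdSimplex ℝ (Fin N) ∧ ∀ i, 0 < x i)
    (hDkinv : ∀ k, ∀ x ∈ Dk k, ∀ (a : A) (ξ : Ξ), Matrix.vecMul x (P k a ξ) ∈ Dk k)
    (D : Set (Fin K → Fin N → ℝ)) (hD : D = {μ | ∀ k, μ k ∈ Dk k})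
    (κ M : ℝ) (hκ1 : κ < 1) (hM : 0 < M)
    (hcontr : ∀ μ ∈ D, ∀ ν ∈ D, ∀ (a : A) (ξ : Ξ),
      ∑ k, dH (Matrix.vecMul (μ k) (P k a ξ)) (Matrix.vecMul (ν k) (P k a ξ))
        ≤ κ * ∑ k, dH (μ k) (ν k))
    (hLip : ∀ μ ∈ D, ∀ ν ∈ D, ∀ (a : A) (ξ : Ξ),
      |r a μ ξ - r a ν ξ| ≤ M * ∑ k, dH (μ k) (ν k)) :
    ∃ (g : ℝ) (h : (Fin K → Fin N → ℝ) → ℝ),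
      ConvexOn ℝ D h ∧
      (∃ Clip : ℝ, ∀ μ ∈ D, ∀ ν ∈ D, |h μ - h ν| ≤ Clip * ∑ k, dH (μ k) (ν k)) ∧
      ∀ μ ∈ D, g + h μ =
        ⨆ a : A, ∫ ξ, (r a μ ξ + h fun k => Matrix.vecMul (μ k) (P k a ξ)) ∂σ := by
  have hDpi : D = univ.pi Dk := by rw [hD]; ext; simp
  have hmem {μ} (hμ : μ ∈ D) : ∀ k, μ k ∈ Dk k := by rwa [hD] at hμ
  have hpos {μ} (hμ : μ ∈ D) (k : Fin K) : ∀ i, 0 < μ k i := (hDksub k _ (hmem hμ k)).2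
  have hDconvex : Convex ℝ D := by rw [hDpi]; exact convex_pi fun k _ => hDkconvex k
  have hm : ContractiveModel D (fun μ ν => ∑ k, dH (μ k) (ν k))
      (fun a ξ μ k => Matrix.vecMul (μ k) (P k a ξ)) r κ M Mr :=
    { isCompact := by rw [hDpi]; exact isCompact_univ_pi hDkcompact
      mapsTo := fun a ξ μ hμ => by rw [hD]; exact fun k => hDkinv k _ (hmem hμ k) a ξ
      continuous_dynamics := fun a μ => continuous_pi fun k =>
        continuous_const.matrix_vecMul ((hPcont k).comp (.prodMk_right a))
      continuous_reward := fun a μ => by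
        have hθ (k : Fin K) : Continuous (θ k a) := (hθcont k).comp (.prodMk_right a)
        simp only [funext (hr a μ)]
        fun_prop
      abs_reward_le := fun a ξ μ hμ => by
        rw [hr]
        exact abs_sum_mul_sum_mul_le hρ (fun k => (hDksub k _ (hmem hμ k)).1) (hθbdd · a ξ)
      convex := hDconvex
      dist_nonneg := fun _ _ _ _ => Finset.sum_nonneg fun _ _ => dH_nonneg _ _
      dist_self := fun μ hμ => Finset.sum_eq_zero fun k _ => dH_self (hpos hμ k)
      continuousOn_dist := continuousOn_sum_dH fun p hp k i => ⟨hpos hp.1 k i, hpos hp.2 k i⟩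
      isLinearMap := fun a ξ => isLinearMap_pi_vecMul fun k => P k a ξ
      contraction := fun a ξ μ hμ ν hν => hcontr μ hμ ν hν a ξ
      convexOn_reward := fun a ξ =>
        (((isLinearMap_sum_mul_sum_mul ρ fun k => θ k a ξ).mk' _).convexOn hDconvex).congr
          fun μ _ => (hr a μ ξ).symm
      lipschitzOnWrt_reward := fun a ξ μ hμ ν hν => hLip μ hμ ν hν a ξ }
  obtain ⟨g, h, hconv, hlip, heq⟩ := hm.exists_ergodic_solution (σ := σ) hκ1 hM.le
  exact ⟨g, h, hconv, ⟨_, hlip⟩, heq⟩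

/-- Theorem 1 of the paper: existence of a solution of the
ergodic eigenproblem. Under the stated assumptions (continuity and
stochasticity of the transitions, bounded rewards, a convex compact invariant
domain `D` contained in the relative interior of the product of simplices,
contraction of the dynamics in Hilbert's metric, Lipschitz reward), there
exist `g ∈ ℝ` and a convex, Hilbert-Lipschitz bias `h : D → ℝ` with
`g + h(μ) = sup_a ∫ [r(a,μ,ξ) + h(μP(a,ξ))] dσ(ξ)` for all `μ ∈ D`. -/
theorem ergodic_eigenproblem_exists
    {A Ξ : Type*} [MetricSpace A] [CompactSpace A] [Nonempty A]
    [MetricSpace Ξ] [CompactSpace Ξ] [MeasurableSpace Ξ] [BorelSpace Ξ]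
    (σ : Measure Ξ) [IsProbabilityMeasure σ]
    (K N : ℕ)
    (P : Fin K → A → Ξ → Matrix (Fin N) (Fin N) ℝ)
    (hPcont : ∀ k, Continuous fun p : A × Ξ => P k p.1 p.2)
    (hPstoch : ∀ k a ξ i, (fun j => P k a ξ i j) ∈ stdSimplex ℝ (Fin N))
    (θ : Fin K → A → Ξ → Fin N → ℝ)
    (hθcont : ∀ k, Continuous fun p : A × Ξ => θ k p.1 p.2)
    (Mr : ℝ) (hθbdd : ∀ k a ξ n, |θ k a ξ n| ≤ Mr)
    (ρ : Fin K → ℝ) (hρ : ρ ∈ stdSimplex ℝ (Fin K))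
    (r : A → (Fin K → Fin N → ℝ) → Ξ → ℝ)
    (hr : ∀ a μ ξ, r a μ ξ = ∑ k, ρ k * ∑ n, θ k a ξ n * μ k n)
    (Dk : Fin K → Set (Fin N → ℝ))
    (hDkconvex : ∀ k, Convex ℝ (Dk k))
    (hDkcompact : ∀ k, IsCompact (Dk k))
    (hDksub : ∀ k, ∀ x ∈ Dk k, x ∈ stdSimplex ℝ (Fin N) ∧ ∀ i, 0 < x i)
    (hDkinv : ∀ k, ∀ x ∈ Dk k, ∀ (a : A) (ξ : Ξ), Matrix.vecMul x (P k a ξ) ∈ Dk k)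
    (D : Set (Fin K → Fin N → ℝ)) (hD : D = {μ | ∀ k, μ k ∈ Dk k})
    (κ M : ℝ) (hκ0 : 0 ≤ κ) (hκ1 : κ < 1) (hM : 0 < M)
    (hcontr : ∀ μ ∈ D, ∀ ν ∈ D, ∀ (a : A) (ξ : Ξ),
      ∑ k, dH (Matrix.vecMul (μ k) (P k a ξ)) (Matrix.vecMul (ν k) (P k a ξ))
        ≤ κ * ∑ k, dH (μ k) (ν k))
    (hLip : ∀ μ ∈ D, ∀ ν ∈ D, ∀ (a : A) (ξ : Ξ),
      |r a μ ξ - r a ν ξ| ≤ M * ∑ k, dH (μ k) (ν k)) :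
    ∃ (g : ℝ) (h : (Fin K → Fin N → ℝ) → ℝ),
      ConvexOn ℝ D h ∧
      (∃ Clip : ℝ, ∀ μ ∈ D, ∀ ν ∈ D, |h μ - h ν| ≤ Clip * ∑ k, dH (μ k) (ν k)) ∧
      ∀ μ ∈ D, g + h μ =
        ⨆ a : A, ∫ ξ, (r a μ ξ + h fun k => Matrix.vecMul (μ k) (P k a ξ)) ∂σ :=
  ergodic_eigenproblem_exists_general σ K N P hPcont θ hθcont Mr hθbdd ρ hρ r hr Dk hDkconvex
    hDkcompact hDksub hDkinv D hD κ M hκ1 hM hcontr hLip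
end

section
/- Optimality of constant prices without switching cost: in the one-offer model with γ = 0, fix β > 0, R ∈ ℝ, C ∈ ℝ. Let τ ≥ 1 and let μ_0, μ_1, …, μ_τ ∈ (0,1) with μ_τ = μ_0 (a τ-cycle). Set a_t = R − (1/β)·log(μ_t/(1−μ_t)) (the unique price realizing the transition to μ_t when γ = 0), the cycle gain g[l] = (1/τ)·Σ_{t=1}^τ (a_t − C)·μ_t, the cycle mean μ̄[l] = (1/τ)·Σ_{t=1}^τ μ_t, the cycle variance V[l] = (1/τ)·Σ_{t=1}^τ (μ_t − μ̄[l])², and the optimal steady-state gain ḡ = sup_{μ∈(0,1)} ( R − C − (1/β)·log(μ/(1−μ)) )·μ. Then g[l] ≤ ḡ − V[l]/β. In particular, among cycles the gain is maximized by constant-price policies. -/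
/-!
Write `h(x) = x log (x / (1 - x))`. The per-step reward of a cycle is `(R - C) μ_t - h(μ_t) / β`,
so the gain is `(R - C) μ̄ - (mean of h(μ_t)) / β`. Since `h'' = 1/(x(1-x)) + 1/(1-x)² ≥ 4`,
the function `h - (· - μ̄)²` is still convex, and Jensen's inequality for it gives
`mean of h(μ_t) ≥ h(μ̄) + V`. Hence the gain is at most the steady-state reward at `μ̄`
minus `V / β`, and that reward is at most `ḡ`.
-/

open Real Set Finset

noncomputable def logit (x : ℝ) : ℝ := log (x / (1 - x))

lemma hasDerivAt_logit {x : ℝ} (hx : x ∈ Ioo (0 : ℝ) 1) :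
    HasDerivAt logit (x⁻¹ + (1 - x)⁻¹) x := by
  have hx0 : x ≠ 0 := hx.1.ne'
  have h1x : 1 - x ≠ 0 := by linarith [hx.2]
  have hdiv : HasDerivAt (fun y => y / (1 - y)) (((1 - x) ^ 2)⁻¹) x :=
    ((hasDerivAt_id' x).div ((hasDerivAt_id' x).const_sub 1) h1x).congr_deriv
      (by field_simp; ring)
  exact (hdiv.log (div_ne_zero hx0 h1x)).congr_deriv (by field_simp; ring)

lemma hasDerivAt_mul_logit {x : ℝ} (hx : x ∈ Ioo (0 : ℝ) 1) :
    HasDerivAt (fun y => y * logit y) (logit x + (1 - x)⁻¹) x := by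
  have hx0 : x ≠ 0 := hx.1.ne'
  have h1x : 1 - x ≠ 0 := by linarith [hx.2]
  exact ((hasDerivAt_id' x).mul (hasDerivAt_logit hx)).congr_deriv (by field_simp; ring)

lemma convexOn_mul_logit_sub_sq (p : ℝ) :
    ConvexOn ℝ (Ioo 0 1) fun x => x * logit x - (x - p) ^ 2 := by
  have hf' : ∀ x ∈ Ioo (0 : ℝ) 1, HasDerivAt (fun x => x * logit x - (x - p) ^ 2)
      (logit x + (1 - x)⁻¹ - 2 * (x - p)) x := fun x hx =>
    ((hasDerivAt_mul_logit hx).sub (((hasDerivAt_id' x).sub_const p).pow 2)).congr_deriv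
      (by ring)
  have hf'' : ∀ x ∈ Ioo (0 : ℝ) 1, HasDerivAt (fun x => logit x + (1 - x)⁻¹ - 2 * (x - p))
      (x⁻¹ + (1 - x)⁻¹ + ((1 - x) ^ 2)⁻¹ - 2) x := fun x hx => by
    have h1x : 1 - x ≠ 0 := by linarith [hx.2]
    exact ((hasDerivAt_logit hx).add (((hasDerivAt_id' x).const_sub 1).inv h1x)).sub
      (((hasDerivAt_id' x).sub_const p).const_mul 2) |>.congr_deriv (by field_simp)
  refine convexOn_of_hasDerivWithinAt2_nonneg (convex_Ioo 0 1)
    (fun x hx => (hf' x hx).continuousAt.continuousWithinAt)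
    (fun x hx => (hf' x (interior_subset hx)).hasDerivWithinAt)
    (fun x hx => (hf'' x (interior_subset hx)).hasDerivWithinAt) fun x hx => ?_
  obtain ⟨hx0, hx1⟩ : x ∈ Ioo (0 : ℝ) 1 := interior_subset hx
  have : 1 ≤ x⁻¹ := one_le_inv₀ hx0 |>.2 hx1.le
  have : 1 ≤ (1 - x)⁻¹ := one_le_inv₀ (by linarith) |>.2 (by linarith)
  have : 0 ≤ ((1 - x) ^ 2)⁻¹ := by positivity
  linarith

lemma Convex.inv_card_mul_sum_mem {ι : Type*} {s : Set ℝ} (hs : Convex ℝ s) {t : Finset ι}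
    (ht : t.Nonempty) {p : ι → ℝ} (hp : ∀ i ∈ t, p i ∈ s) : (#t : ℝ)⁻¹ * ∑ i ∈ t, p i ∈ s := by
  simpa only [smul_eq_mul, ← mul_sum] using
    hs.sum_mem (fun _ _ => inv_nonneg.2 t.card.cast_nonneg)
      (t.sum_centroidWeights_eq_one_of_nonempty ℝ ht) hp

lemma mul_logit_add_variance_le {ι : Type*} {s : Finset ι} (hs : s.Nonempty) {p : ι → ℝ}
    (hp : ∀ i ∈ s, p i ∈ Ioo (0 : ℝ) 1) {m : ℝ} (hm : m = (#s : ℝ)⁻¹ * ∑ i ∈ s, p i) :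
    m * logit m + (#s : ℝ)⁻¹ * ∑ i ∈ s, (p i - m) ^ 2 ≤
      (#s : ℝ)⁻¹ * ∑ i ∈ s, p i * logit (p i) := by
  have hjensen := (convexOn_mul_logit_sub_sq m).map_sum_le
    (fun _ _ => inv_nonneg.2 s.card.cast_nonneg)
    (s.sum_centroidWeights_eq_one_of_nonempty ℝ hs) hp
  simp only [smul_eq_mul, ← mul_sum, ← hm, sub_self, mul_sub, sum_sub_distrib] at hjensen
  linarith

lemma neg_one_lt_mul_logit {x : ℝ} (hx : x ∈ Ioo (0 : ℝ) 1) : -1 < x * logit x := by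
  have h1x : 0 < 1 - x := by linarith [hx.2]
  have hlog_x : 1 - x⁻¹ ≤ log x := one_sub_inv_le_log_of_pos hx.1
  have hlog_1x : log (1 - x) ≤ 0 := log_nonpos h1x.le (by linarith [hx.1])
  rw [logit, log_div hx.1.ne' h1x.ne']
  calc -1 < x * (1 - x⁻¹) := by rw [mul_sub, mul_inv_cancel₀ hx.1.ne']; linarith [hx.1]
    _ ≤ x * log x := mul_le_mul_of_nonneg_left hlog_x hx.1.le
    _ ≤ x * (log x - log (1 - x)) := by nlinarith [hx.1]

lemma bddAbove_sub_mul_logit_mul (c k : ℝ) (hk : 0 ≤ k) :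
    BddAbove {y | ∃ x ∈ Ioo (0 : ℝ) 1, y = (c - k * logit x) * x} := by
  refine ⟨|c| + k, ?_⟩
  rintro y ⟨x, hx, rfl⟩
  have hcx : c * x ≤ |c| := by
    calc c * x ≤ |c| * x := mul_le_mul_of_nonneg_right (le_abs_self c) hx.1.le
      _ ≤ |c| := mul_le_of_le_one_right (abs_nonneg c) hx.2.le
  nlinarith [neg_one_lt_mul_logit hx]

theorem constant_price_optimal_without_switching_cost_general
    (β R C : ℝ) (hβ : 0 < β) (τ : ℕ) (hτ : 1 ≤ τ)
    (μ : ℕ → ℝ) (hμ : ∀ t ≤ τ, μ t ∈ Set.Ioo (0 : ℝ) 1)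
    (a : ℕ → ℝ) (ha : ∀ t, a t = R - 1 / β * Real.log (μ t / (1 - μ t)))
    (g μbar V gbar : ℝ)
    (hg : g = 1 / (τ : ℝ) * ∑ t ∈ Finset.Icc 1 τ, (a t - C) * μ t)
    (hμbar : μbar = 1 / (τ : ℝ) * ∑ t ∈ Finset.Icc 1 τ, μ t)
    (hV : V = 1 / (τ : ℝ) * ∑ t ∈ Finset.Icc 1 τ, (μ t - μbar) ^ 2)
    (hgbar : gbar = sSup {x | ∃ m ∈ Set.Ioo (0 : ℝ) 1,
      x = (R - C - 1 / β * Real.log (m / (1 - m))) * m}) :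
    g ≤ gbar - V / β := by
  set S := Finset.Icc 1 τ
  have hcard : (#S : ℝ) = τ := by simp [S]
  have hmem : ∀ t ∈ S, μ t ∈ Ioo (0 : ℝ) 1 := fun t ht => hμ t (Finset.mem_Icc.1 ht).2
  rw [one_div, ← hcard] at hg hμbar hV
  have hμbar_mem : μbar ∈ Ioo (0 : ℝ) 1 :=
    hμbar ▸ (convex_Ioo 0 1).inv_card_mul_sum_mem (nonempty_Icc.2 hτ) hmem
  have hvariance := mul_logit_add_variance_le (nonempty_Icc.2 hτ) hmem hμbar
  rw [← hV] at hvariance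
  have hsteady : (R - C - 1 / β * logit μbar) * μbar ≤ gbar :=
    hgbar ▸ le_csSup (bddAbove_sub_mul_logit_mul (R - C) (1 / β) (by positivity))
      ⟨μbar, hμbar_mem, rfl⟩
  have hsum : ∑ t ∈ S, (a t - C) * μ t =
      (R - C) * ∑ t ∈ S, μ t - 1 / β * ∑ t ∈ S, μ t * logit (μ t) := by
    simp only [ha, logit, mul_sum, ← sum_sub_distrib]
    exact sum_congr rfl fun t _ => by ring
  calc g = (R - C) * μbar - 1 / β * ((#S : ℝ)⁻¹ * ∑ t ∈ S, μ t * logit (μ t)) := by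
        rw [hg, hsum, hμbar]; ring
    _ ≤ (R - C) * μbar - 1 / β * (μbar * logit μbar + V) := by gcongr
    _ = (R - C - 1 / β * logit μbar) * μbar - V / β := by ring
    _ ≤ gbar - V / β := by linarith

/-- Proposition 9 of the paper: optimality of constant
prices without switching cost. In the one-offer model with `γ = 0`, the gain
of any `τ`-cycle `l` is at most the optimal steady-state gain minus
`V[l]/β`, where `V[l]` is the variance of the customer distribution over the
cycle; hence constant-price policies are optimal among cycles. -/
theorem constant_price_optimal_without_switching_cost
    (β R C : ℝ) (hβ : 0 < β) (τ : ℕ) (hτ : 1 ≤ τ)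
    (μ : ℕ → ℝ) (hμ : ∀ t ≤ τ, μ t ∈ Set.Ioo (0 : ℝ) 1) (hcycle : μ τ = μ 0)
    (a : ℕ → ℝ) (ha : ∀ t, a t = R - 1 / β * Real.log (μ t / (1 - μ t)))
    (g μbar V gbar : ℝ)
    (hg : g = 1 / (τ : ℝ) * ∑ t ∈ Finset.Icc 1 τ, (a t - C) * μ t)
    (hμbar : μbar = 1 / (τ : ℝ) * ∑ t ∈ Finset.Icc 1 τ, μ t)
    (hV : V = 1 / (τ : ℝ) * ∑ t ∈ Finset.Icc 1 τ, (μ t - μbar) ^ 2)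
    (hgbar : gbar = sSup {x | ∃ m ∈ Set.Ioo (0 : ℝ) 1,
      x = (R - C - 1 / β * Real.log (m / (1 - m))) * m}) :
    g ≤ gbar - V / β :=
  constant_price_optimal_without_switching_cost_general β R C hβ τ hτ μ hμ a ha g μbar V gbar hg
    hμbar hV hgbar
end
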